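/- (Theorem 2(ii), efficient allocations are supported by sequential competitive equilibria) Suppose (ŷ^G, ŷ^L, x̂, ẑ, θ̂) is a KKT point of (SPP-P) with multipliers (λ, μ, γ). Set prices P_{1,i} := λ_{1,i} and P_{2,i}(w) := λ_{2,i}(w). Then (ŷ^G, ŷ^L, θ̂) maximizes the ISO objective Σ_i P_{1,i}(Σ_{k∈L_i} y^L_{1,k} − Σ_{k∈G_i} y^G_{1,k}) + Σ_w Σ_i P_{2,i}(w)(Σ_{k∈L_i} y^L_{2,k}(w) − Σ_{k∈G_i} y^G_{2,k}(w)) p_w over all nonnegative generations and consumptions and all angles satisfying the first- and second-stage nodal balance equations and line limits; consequently, the efficient sequential allocation (ŷ^G, ŷ^L, x̂, ẑ) together with the prices (λ_1, λ_2(·)) constitutes a sequential competitive equilibrium. -/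
import Mathlib


open scoped BigOperators


private lemma sum_antisymm {N : Type} [Fintype N] (F : N → N → ℝ)
    (h : ∀ i j, F i j + F j i = 0) : (∑ i, ∑ j, F i j) = 0 := by
  have h2 : (∑ i, ∑ j, F i j) + (∑ i, ∑ j, F i j) = 0 := by
    nth_rewrite 2 [Finset.sum_comm]
    rw [← Finset.sum_add_distrib]
    rw [Finset.sum_congr rfl (fun i _ => (Finset.sum_add_distrib (f := fun j => F i j) (g := fun j => F j i)).symm)]
    simp [h]
  linarith

private lemma grad_ineq {f : ℝ → ℝ} (hc : ConvexOn ℝ (Set.Ici (0:ℝ)) f)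
    (hd : Differentiable ℝ f) {a b : ℝ} (ha : 0 ≤ a) (hb : 0 ≤ b) :
    f a + deriv f a * (b - a) ≤ f b := by
  rcases lt_trichotomy a b with h | h | h
  · have hs := hc.deriv_le_slope (Set.mem_Ici.2 ha) (Set.mem_Ici.2 hb) h (hd a)
    rw [slope_def_field] at hs
    have hba : (0:ℝ) < b - a := by linarith
    have := (le_div_iff₀ hba).mp hs
    linarith
  · subst h; simp
  · have hs := hc.slope_le_deriv (Set.mem_Ici.2 hb) (Set.mem_Ici.2 ha) h (hd a)
    rw [slope_def_field] at hs
    have hab : (0:ℝ) < a - b := by linarith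
    have := (div_le_iff₀ hab).mp hs
    nlinarith

private lemma price_opt {f : ℝ → ℝ} (hc : ConvexOn ℝ (Set.Ici (0:ℝ)) f)
    (hd : Differentiable ℝ f) {lam yhat : ℝ} (hy : 0 ≤ yhat)
    (h1 : lam ≤ deriv f yhat) (h2 : 0 < yhat → deriv f yhat = lam)
    {y' : ℝ} (hy' : 0 ≤ y') : lam * y' - f y' ≤ lam * yhat - f yhat := by
  have hg := grad_ineq hc hd hy hy'
  rcases eq_or_lt_of_le hy with h | h
  · have h0 : yhat = 0 := h.symm
    subst h0
    have h3 : lam * (y' - 0) ≤ deriv f 0 * (y' - 0) :=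
      mul_le_mul_of_nonneg_right h1 (by linarith)
    nlinarith
  · have he := h2 h
    rw [he] at hg
    nlinarith

private lemma keyC {N : Type} [Fintype N] (B : N → N → ℝ) (hB : ∀ i j, B i j = B j i)
    (c : N → ℝ) (g : N → N → ℝ) (θ : N → ℝ)
    (hstat : ∀ i, ∑ j, B i j * (c i - c j + g i j - g j i) = 0) :
    (∑ i, c i * (∑ j, B i j * (θ i - θ j))) + ∑ i, ∑ j, g i j * (B i j * (θ i - θ j)) = 0 := by
  have h0 : ∑ i, ∑ j, θ i * (B i j * (c i - c j + g i j - g j i)) = 0 := by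
    refine Finset.sum_eq_zero fun i _ => ?_
    rw [← Finset.mul_sum, hstat i, mul_zero]
  have hA := sum_antisymm (fun i j => c i * (B i j * (θ i - θ j)) + g i j * (B i j * (θ i - θ j))
      - θ i * (B i j * (c i - c j + g i j - g j i)))
    (fun i j => by simp only [hB j i]; ring)
  simp only [Finset.sum_sub_distrib, Finset.sum_add_distrib] at hA
  rw [h0, sub_zero] at hA
  have hm : ∑ i, c i * (∑ j, B i j * (θ i - θ j)) = ∑ i, ∑ j, c i * (B i j * (θ i - θ j)) :=
    Finset.sum_congr rfl fun i _ => Finset.mul_sum _ _ _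
  linarith [hA, hm]

section
variable {N W : Type} [Fintype N] [Fintype W]

private lemma iso_value (B : N → N → ℝ) (hB : ∀ i j, B i j = B j i) (p : W → ℝ)
    (lam1 : N → ℝ) (lam2 : W → N → ℝ) (gam1 : N → N → ℝ) (gam2 : W → N → N → ℝ)
    (net1 : N → ℝ) (net2 : W → N → ℝ) (th1 : N → ℝ) (th2 : W → N → ℝ)
    (hb1 : ∀ i, net1 i = ∑ j, B i j * (th1 i - th1 j))
    (hb2 : ∀ w i, net2 w i = ∑ j, B i j * (th2 w i - th2 w j - th1 i + th1 j))
    (hstat1 : ∀ i, ∑ j, B i j * (lam1 i - lam1 j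
        - (∑ w, (lam2 w i - lam2 w j) * p w) + gam1 i j - gam1 j i) = 0)
    (hstat2 : ∀ w i, ∑ j, B i j * (lam2 w i - lam2 w j + gam2 w i j - gam2 w j i) = 0) :
    (∑ i, lam1 i * (-(net1 i))) + ∑ w, (∑ i, lam2 w i * (-(net2 w i))) * p w
      = (∑ i, ∑ j, gam1 i j * (B i j * (th1 i - th1 j)))
        + ∑ w, (∑ i, ∑ j, gam2 w i j * (B i j * (th2 w i - th2 w j))) * p w := by
  set G1S : ℝ := ∑ i, ∑ j, gam1 i j * (B i j * (th1 i - th1 j)) with hG1S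
  set G2S : W → ℝ := fun w => ∑ i, ∑ j, gam2 w i j * (B i j * (th2 w i - th2 w j)) with hG2S
  -- first-stage stationarity in keyC form
  have hsub : ∀ i j : N, ∑ w, (lam2 w i - lam2 w j) * p w
      = (∑ w, lam2 w i * p w) - ∑ w, lam2 w j * p w := by
    intro i j
    rw [← Finset.sum_sub_distrib]
    exact Finset.sum_congr rfl fun w _ => by ring
  have hstat1' : ∀ i, ∑ j, B i j * ((lam1 i - ∑ w, lam2 w i * p w)
      - (lam1 j - ∑ w, lam2 w j * p w) + gam1 i j - gam1 j i) = 0 := by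
    intro i
    rw [← hstat1 i]
    exact Finset.sum_congr rfl fun j _ => by rw [hsub i j]; ring
  have hk1 := keyC B hB (fun i => lam1 i - ∑ w, lam2 w i * p w) gam1 th1 hstat1'
  have hk2 : ∀ w, (∑ i, lam2 w i * (∑ j, B i j * (th2 w i - th2 w j))) + G2S w = 0 :=
    fun w => keyC B hB (lam2 w) (gam2 w) (th2 w) (hstat2 w)
  -- replace angle sums by nets
  have hA2 : ∀ w i, ∑ j, B i j * (th2 w i - th2 w j) = net2 w i + net1 i := by
    intro w i
    rw [hb1 i, hb2 w i, ← Finset.sum_add_distrib]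
    exact Finset.sum_congr rfl fun j _ => by ring
  have hk1' : (∑ i, (lam1 i - ∑ w, lam2 w i * p w) * net1 i) + G1S = 0 := by
    rw [show (∑ i, (lam1 i - ∑ w, lam2 w i * p w) * net1 i)
        = ∑ i, (lam1 i - ∑ w, lam2 w i * p w) * (∑ j, B i j * (th1 i - th1 j)) from
      Finset.sum_congr rfl fun i _ => by rw [hb1 i]]
    exact hk1
  have hk2' : ∀ w, (∑ i, lam2 w i * (net2 w i + net1 i)) + G2S w = 0 := by
    intro w
    rw [show (∑ i, lam2 w i * (net2 w i + net1 i))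
        = ∑ i, lam2 w i * (∑ j, B i j * (th2 w i - th2 w j)) from
      Finset.sum_congr rfl fun i _ => by rw [hA2 w i]]
    exact hk2 w
  -- expand
  have e1 : (∑ i, (lam1 i - ∑ w, lam2 w i * p w) * net1 i)
      = (∑ i, lam1 i * net1 i) - ∑ i, (∑ w, lam2 w i * p w) * net1 i := by
    rw [← Finset.sum_sub_distrib]
    exact Finset.sum_congr rfl fun i _ => by ring
  have e2 : ∀ w, (∑ i, lam2 w i * (net2 w i + net1 i))
      = (∑ i, lam2 w i * net2 w i) + ∑ i, lam2 w i * net1 i := by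
    intro w
    rw [← Finset.sum_add_distrib]
    exact Finset.sum_congr rfl fun i _ => by ring
  have swap : ∑ i, (∑ w, lam2 w i * p w) * net1 i
      = ∑ w, (∑ i, lam2 w i * net1 i) * p w := by
    calc ∑ i, (∑ w, lam2 w i * p w) * net1 i
        = ∑ i, ∑ w, lam2 w i * p w * net1 i :=
          Finset.sum_congr rfl fun i _ => Finset.sum_mul _ _ _
      _ = ∑ w, ∑ i, lam2 w i * p w * net1 i := Finset.sum_comm
      _ = ∑ w, (∑ i, lam2 w i * net1 i) * p w := Finset.sum_congr rfl fun w _ => by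
          rw [Finset.sum_mul]
          exact Finset.sum_congr rfl fun i _ => by ring
  -- per-w value of second sum
  have h3 : ∑ w, (∑ i, lam2 w i * (-(net2 w i))) * p w
      = ∑ w, ((∑ i, lam2 w i * net1 i) * p w + G2S w * p w) := by
    refine Finset.sum_congr rfl fun w _ => ?_
    have hneg : (∑ i, lam2 w i * (-(net2 w i))) = -(∑ i, lam2 w i * net2 w i) := by
      rw [← Finset.sum_neg_distrib]
      exact Finset.sum_congr rfl fun i _ => by ring
    have h := hk2' w
    rw [e2 w] at h
    rw [hneg]
    linear_combination (-(p w)) * h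
  have h4 : ∑ w, ((∑ i, lam2 w i * net1 i) * p w + G2S w * p w)
      = (∑ w, (∑ i, lam2 w i * net1 i) * p w) + ∑ w, G2S w * p w :=
    Finset.sum_add_distrib
  have h5 : (∑ i, lam1 i * (-(net1 i))) = -(∑ i, lam1 i * net1 i) := by
    rw [← Finset.sum_neg_distrib]
    exact Finset.sum_congr rfl fun i _ => by ring
  rw [h3, h4, h5]
  rw [e1] at hk1'
  rw [swap] at hk1'
  linarith [hk1']

end

/-- A point of the two-stage social planner's problem (SPP-P): first- and second-stage
generations, consumptions, demand response, blackouts, and phase angles. -/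
structure MarketPoint (N G L W : Type) where
  yG1 : G → ℝ
  yG2 : G → W → ℝ
  yL1 : L → ℝ
  yL2 : L → W → ℝ
  xdr : L → W → ℝ
  zbo : L → W → ℝ
  th1 : N → ℝ
  th2 : W → N → ℝ

/-- Lagrange multipliers of (SPP-P): nodal prices, demand-coverage multipliers and
line-limit multipliers. -/
structure SPPMultipliers (N L W : Type) where
  lam1 : N → ℝ
  lam2 : W → N → ℝ
  mu : L → W → ℝ
  gam1 : N → N → ℝ
  gam2 : W → N → N → ℝ

variable {N G L W : Type} [Fintype N] [Fintype G] [Fintype L] [Fintype W] [DecidableEq N]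

/-- Feasibility for (SPP-P). -/
def SPPFeasible (nodeG : G → N) (nodeL : L → N) (B fmax : N → N → ℝ)
    (D : L → ℝ) (ren : L → W → ℝ) (P : MarketPoint N G L W) : Prop :=
  (∀ k, 0 ≤ P.yG1 k) ∧ (∀ k w, 0 ≤ P.yG2 k w) ∧
  (∀ k, 0 ≤ P.yL1 k) ∧ (∀ k w, 0 ≤ P.yL2 k w) ∧
  (∀ k w, 0 ≤ P.xdr k w) ∧ (∀ k w, 0 ≤ P.zbo k w) ∧
  (∀ i, (∑ k, if nodeG k = i then P.yG1 k else 0)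
        - (∑ k, if nodeL k = i then P.yL1 k else 0)
      = ∑ j, B i j * (P.th1 i - P.th1 j)) ∧
  (∀ (w : W) (i : N), (∑ k, if nodeG k = i then P.yG2 k w else 0)
        - (∑ k, if nodeL k = i then P.yL2 k w else 0)
      = ∑ j, B i j * (P.th2 w i - P.th2 w j - P.th1 i + P.th1 j)) ∧
  (∀ i j, B i j * (P.th1 i - P.th1 j) ≤ fmax i j) ∧
  (∀ (w : W) (i j : N), B i j * (P.th2 w i - P.th2 w j) ≤ fmax i j) ∧
  (∀ (k : L) (w : W), D k - ren k w ≤ P.yL1 k + P.yL2 k w + P.xdr k w + P.zbo k w)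

/-- Objective (aggregate welfare) of (SPP-P). -/
noncomputable def SPPObj (p : W → ℝ) (c1 c2 : G → ℝ → ℝ) (cdr cbo : L → ℝ → ℝ)
    (P : MarketPoint N G L W) : ℝ :=
  -(∑ k, (c1 k (P.yG1 k) + ∑ w, c2 k (P.yG2 k w) * p w))
    - ∑ k, ∑ w, (cdr k (P.xdr k w) + cbo k (P.zbo k w)) * p w

/-- KKT conditions of (SPP-P). -/
def SPPKKT (nodeG : G → N) (nodeL : L → N) (B fmax : N → N → ℝ)
    (p : W → ℝ) (c1 c2 : G → ℝ → ℝ) (cdr cbo : L → ℝ → ℝ)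
    (D : L → ℝ) (ren : L → W → ℝ)
    (P : MarketPoint N G L W) (M : SPPMultipliers N L W) : Prop :=
  SPPFeasible nodeG nodeL B fmax D ren P ∧
  (∀ k w, 0 ≤ M.mu k w) ∧
  (∀ i j, 0 ≤ M.gam1 i j) ∧ (∀ (w : W) (i j : N), 0 ≤ M.gam2 w i j) ∧
  (∀ k : G, M.lam1 (nodeG k) ≤ deriv (c1 k) (P.yG1 k)) ∧
  (∀ k : G, 0 < P.yG1 k → deriv (c1 k) (P.yG1 k) = M.lam1 (nodeG k)) ∧
  (∀ (k : G) (w : W), M.lam2 w (nodeG k) ≤ deriv (c2 k) (P.yG2 k w)) ∧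
  (∀ (k : G) (w : W), 0 < P.yG2 k w → deriv (c2 k) (P.yG2 k w) = M.lam2 w (nodeG k)) ∧
  (∀ k : L, ∑ w, M.mu k w * p w ≤ M.lam1 (nodeL k)) ∧
  (∀ k : L, 0 < P.yL1 k → M.lam1 (nodeL k) = ∑ w, M.mu k w * p w) ∧
  (∀ (k : L) (w : W), M.mu k w ≤ M.lam2 w (nodeL k)) ∧
  (∀ (k : L) (w : W), 0 < P.yL2 k w → M.lam2 w (nodeL k) = M.mu k w) ∧
  (∀ (k : L) (w : W), M.mu k w ≤ deriv (cdr k) (P.xdr k w)) ∧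
  (∀ (k : L) (w : W), 0 < P.xdr k w → deriv (cdr k) (P.xdr k w) = M.mu k w) ∧
  (∀ (k : L) (w : W), M.mu k w ≤ deriv (cbo k) (P.zbo k w)) ∧
  (∀ (k : L) (w : W), 0 < P.zbo k w → deriv (cbo k) (P.zbo k w) = M.mu k w) ∧
  (∀ (k : L) (w : W),
      D k - ren k w < P.yL1 k + P.yL2 k w + P.xdr k w + P.zbo k w → M.mu k w = 0) ∧
  (∀ i, ∑ j, B i j * (M.lam1 i - M.lam1 j
        - (∑ w, (M.lam2 w i - M.lam2 w j) * p w) + M.gam1 i j - M.gam1 j i) = 0) ∧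
  (∀ (w : W) (i : N),
      ∑ j, B i j * (M.lam2 w i - M.lam2 w j + M.gam2 w i j - M.gam2 w j i) = 0) ∧
  (∀ i j, M.gam1 i j * (B i j * (P.th1 i - P.th1 j) - fmax i j) = 0) ∧
  (∀ (w : W) (i j : N), M.gam2 w i j * (B i j * (P.th2 w i - P.th2 w j) - fmax i j) = 0)

/-- Assumption 1: all cost functions are strictly convex, (strictly) increasing,
differentiable and nonnegative on [0,∞). -/
def Assumption1 (c1 c2 : G → ℝ → ℝ) (cdr cbo : L → ℝ → ℝ) : Prop :=
  (∀ k : G, StrictConvexOn ℝ (Set.Ici (0:ℝ)) (c1 k) ∧ StrictMonoOn (c1 k) (Set.Ici (0:ℝ)) ∧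
      Differentiable ℝ (c1 k) ∧ ∀ y ∈ Set.Ici (0:ℝ), 0 ≤ c1 k y) ∧
  (∀ k : G, StrictConvexOn ℝ (Set.Ici (0:ℝ)) (c2 k) ∧ StrictMonoOn (c2 k) (Set.Ici (0:ℝ)) ∧
      Differentiable ℝ (c2 k) ∧ ∀ y ∈ Set.Ici (0:ℝ), 0 ≤ c2 k y) ∧
  (∀ k : L, StrictConvexOn ℝ (Set.Ici (0:ℝ)) (cdr k) ∧ StrictMonoOn (cdr k) (Set.Ici (0:ℝ)) ∧
      Differentiable ℝ (cdr k) ∧ ∀ y ∈ Set.Ici (0:ℝ), 0 ≤ cdr k y) ∧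
  (∀ k : L, StrictConvexOn ℝ (Set.Ici (0:ℝ)) (cbo k) ∧ StrictMonoOn (cbo k) (Set.Ici (0:ℝ)) ∧
      Differentiable ℝ (cbo k) ∧ ∀ y ∈ Set.Ici (0:ℝ), 0 ≤ cbo k y)

/-- Optimality of generator (i,k)'s plan for its combined two-stage problem (GEN-P),
given nodal prices. -/
def GenOpt (p : W → ℝ) (c1 c2 : G → ℝ → ℝ) (P1 : N → ℝ) (P2 : W → N → ℝ)
    (nodeG : G → N) (k : G) (y1 : ℝ) (y2 : W → ℝ) : Prop :=
  0 ≤ y1 ∧ (∀ w, 0 ≤ y2 w) ∧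
  ∀ (y1' : ℝ) (y2' : W → ℝ), 0 ≤ y1' → (∀ w, 0 ≤ y2' w) →
    P1 (nodeG k) * y1' - c1 k y1' + ∑ w, (P2 w (nodeG k) * y2' w - c2 k (y2' w)) * p w
      ≤ P1 (nodeG k) * y1 - c1 k y1 + ∑ w, (P2 w (nodeG k) * y2 w - c2 k (y2 w)) * p w

/-- Optimality of LSE (i,k)'s plan for its combined two-stage problem (LSE-P),
given nodal prices. -/
def LSEOpt (p : W → ℝ) (cdr cbo : L → ℝ → ℝ) (P1 : N → ℝ) (P2 : W → N → ℝ)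
    (nodeL : L → N) (D : L → ℝ) (ren : L → W → ℝ)
    (k : L) (y1 : ℝ) (y2 x z : W → ℝ) : Prop :=
  0 ≤ y1 ∧ (∀ w, 0 ≤ y2 w) ∧ (∀ w, 0 ≤ x w) ∧ (∀ w, 0 ≤ z w) ∧
  (∀ w, D k - ren k w ≤ y1 + y2 w + x w + z w) ∧
  ∀ (y1' : ℝ) (y2' x' z' : W → ℝ), 0 ≤ y1' → (∀ w, 0 ≤ y2' w) → (∀ w, 0 ≤ x' w) →
    (∀ w, 0 ≤ z' w) → (∀ w, D k - ren k w ≤ y1' + y2' w + x' w + z' w) →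
    -(P1 (nodeL k)) * y1' - (∑ w, P2 w (nodeL k) * y2' w * p w)
        - (∑ w, (cdr k (x' w) + cbo k (z' w)) * p w)
      ≤ -(P1 (nodeL k)) * y1 - (∑ w, P2 w (nodeL k) * y2 w * p w)
        - (∑ w, (cdr k (x w) + cbo k (z w)) * p w)

/-- Market clearing in both stages in all scenarios. -/
def MarketClears (P : MarketPoint N G L W) : Prop :=
  ((∑ k, P.yG1 k) = ∑ k, P.yL1 k) ∧ ∀ w : W, (∑ k, P.yG2 k w) = ∑ k, P.yL2 k w

/-- Feasibility for the ISO problem: nonnegativity, nodal balance and line limits. -/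
def ISOFeasible (nodeG : G → N) (nodeL : L → N) (B fmax : N → N → ℝ)
    (yG1 : G → ℝ) (yG2 : G → W → ℝ) (yL1 : L → ℝ) (yL2 : L → W → ℝ)
    (th1 : N → ℝ) (th2 : W → N → ℝ) : Prop :=
  (∀ k, 0 ≤ yG1 k) ∧ (∀ k w, 0 ≤ yG2 k w) ∧ (∀ k, 0 ≤ yL1 k) ∧ (∀ k w, 0 ≤ yL2 k w) ∧
  (∀ i, (∑ k, if nodeG k = i then yG1 k else 0) - (∑ k, if nodeL k = i then yL1 k else 0)
      = ∑ j, B i j * (th1 i - th1 j)) ∧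
  (∀ (w : W) (i : N), (∑ k, if nodeG k = i then yG2 k w else 0)
        - (∑ k, if nodeL k = i then yL2 k w else 0)
      = ∑ j, B i j * (th2 w i - th2 w j - th1 i + th1 j)) ∧
  (∀ i j, B i j * (th1 i - th1 j) ≤ fmax i j) ∧
  (∀ (w : W) (i j : N), B i j * (th2 w i - th2 w j) ≤ fmax i j)

/-- Objective of the ISO problem, given nodal prices. -/
noncomputable def ISOObj (nodeG : G → N) (nodeL : L → N) (p : W → ℝ)
    (P1 : N → ℝ) (P2 : W → N → ℝ)
    (yG1 : G → ℝ) (yG2 : G → W → ℝ) (yL1 : L → ℝ) (yL2 : L → W → ℝ) : ℝ :=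
  (∑ i, P1 i * ((∑ k, if nodeL k = i then yL1 k else 0)
      - (∑ k, if nodeG k = i then yG1 k else 0)))
  + ∑ w, (∑ i, P2 w i * ((∑ k, if nodeL k = i then yL2 k w else 0)
      - (∑ k, if nodeG k = i then yG2 k w else 0))) * p w

/-- Theorem 2(ii) (second welfare theorem): for a KKT point of (SPP-P) with prices set
to the balance multipliers, the allocation and angles maximize the ISO objective over
the ISO feasible set; consequently the efficient sequential allocation together with
the prices (λ₁, λ₂(·)) constitutes a sequential competitive equilibrium (generator and
LSE optimality plus market clearing). -/
theorem efficient_allocation_supported_by_equilibrium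
    (nodeG : G → N) (nodeL : L → N) (B fmax : N → N → ℝ)
    (hBsymm : ∀ i j, B i j = B j i)
    (hfsymm : ∀ i j, fmax i j = fmax j i) (hfnonneg : ∀ i j, 0 ≤ fmax i j)
    (p : W → ℝ) (hp : ∀ w, 0 < p w) (hpsum : ∑ w, p w = 1)
    (c1 c2 : G → ℝ → ℝ) (cdr cbo : L → ℝ → ℝ)
    (hA1 : Assumption1 c1 c2 cdr cbo)
    (D : L → ℝ) (hD : ∀ k, 0 ≤ D k)
    (ren : L → W → ℝ) (hren : ∀ k w, 0 ≤ ren k w)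
    (P : MarketPoint N G L W) (M : SPPMultipliers N L W)
    (hKKT : SPPKKT nodeG nodeL B fmax p c1 c2 cdr cbo D ren P M) :
    -- the allocation maximizes the ISO objective at prices (λ₁, λ₂(·))
    (ISOFeasible nodeG nodeL B fmax P.yG1 P.yG2 P.yL1 P.yL2 P.th1 P.th2
      ∧ ∀ (yG1 : G → ℝ) (yG2 : G → W → ℝ) (yL1 : L → ℝ) (yL2 : L → W → ℝ)
          (th1 : N → ℝ) (th2 : W → N → ℝ),
          ISOFeasible nodeG nodeL B fmax yG1 yG2 yL1 yL2 th1 th2 →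
          ISOObj nodeG nodeL p M.lam1 M.lam2 yG1 yG2 yL1 yL2
            ≤ ISOObj nodeG nodeL p M.lam1 M.lam2 P.yG1 P.yG2 P.yL1 P.yL2)
    -- consequently, the allocation with these prices is a sequential competitive
    -- equilibrium
    ∧ (∀ k : G, GenOpt p c1 c2 M.lam1 M.lam2 nodeG k (P.yG1 k) (P.yG2 k))
    ∧ (∀ k : L, LSEOpt p cdr cbo M.lam1 M.lam2 nodeL D ren k
        (P.yL1 k) (P.yL2 k) (P.xdr k) (P.zbo k))
    ∧ MarketClears P := by
  obtain ⟨hfeas, hmu, hg1, hg2, hc1a, hc1b, hc2a, hc2b, hl1a, hl1b, hl2a, hl2b,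
    hdra, hdrb, hboa, hbob, hcs, hst1, hst2, hcsg1, hcsg2⟩ := hKKT
  obtain ⟨hyG1, hyG2, hyL1, hyL2, hx, hz, hbal1, hbal2, hlim1, hlim2, hcov⟩ := hfeas
  have hisofeasP : ISOFeasible nodeG nodeL B fmax P.yG1 P.yG2 P.yL1 P.yL2 P.th1 P.th2 :=
    ⟨hyG1, hyG2, hyL1, hyL2, hbal1, hbal2, hlim1, hlim2⟩
  -- value of the ISO objective at any ISO-feasible point
  have hval : ∀ (yG1 : G → ℝ) (yG2 : G → W → ℝ) (yL1 : L → ℝ) (yL2 : L → W → ℝ)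
      (th1 : N → ℝ) (th2 : W → N → ℝ),
      ISOFeasible nodeG nodeL B fmax yG1 yG2 yL1 yL2 th1 th2 →
      ISOObj nodeG nodeL p M.lam1 M.lam2 yG1 yG2 yL1 yL2
        = (∑ i, ∑ j, M.gam1 i j * (B i j * (th1 i - th1 j)))
          + ∑ w, (∑ i, ∑ j, M.gam2 w i j * (B i j * (th2 w i - th2 w j))) * p w := by
    intro yG1 yG2 yL1 yL2 th1 th2 hfe
    obtain ⟨-, -, -, -, hb1, hb2, -, -⟩ := hfe
    have hmain := iso_value B hBsymm p M.lam1 M.lam2 M.gam1 M.gam2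
      (fun i => (∑ k, if nodeG k = i then yG1 k else 0)
        - (∑ k, if nodeL k = i then yL1 k else 0))
      (fun w i => (∑ k, if nodeG k = i then yG2 k w else 0)
        - (∑ k, if nodeL k = i then yL2 k w else 0))
      th1 th2 hb1 hb2 hst1 hst2
    rw [← hmain]
    unfold ISOObj
    congr 1
    · exact Finset.sum_congr rfl fun i _ => by ring
    · exact Finset.sum_congr rfl fun w _ => by
        congr 1
        exact Finset.sum_congr rfl fun i _ => by ring
  refine ⟨⟨hisofeasP, ?_⟩, ?_, ?_, ?_⟩
  · -- ISO optimality
    intro yG1 yG2 yL1 yL2 th1 th2 hfe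
    have hcand := hval yG1 yG2 yL1 yL2 th1 th2 hfe
    have hhat := hval P.yG1 P.yG2 P.yL1 P.yL2 P.th1 P.th2 hisofeasP
    obtain ⟨-, -, -, -, -, -, hl1', hl2'⟩ := hfe
    have heq1 : ∀ i j, M.gam1 i j * (B i j * (P.th1 i - P.th1 j)) = M.gam1 i j * fmax i j :=
      fun i j => by linear_combination hcsg1 i j
    have heq2 : ∀ (w : W) (i j : N),
        M.gam2 w i j * (B i j * (P.th2 w i - P.th2 w j)) = M.gam2 w i j * fmax i j :=
      fun w i j => by linear_combination hcsg2 w i j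
    have hhat' : ISOObj nodeG nodeL p M.lam1 M.lam2 P.yG1 P.yG2 P.yL1 P.yL2
        = (∑ i, ∑ j, M.gam1 i j * fmax i j)
          + ∑ w, (∑ i, ∑ j, M.gam2 w i j * fmax i j) * p w := by
      rw [hhat]
      congr 1
      · exact Finset.sum_congr rfl fun i _ =>
          Finset.sum_congr rfl fun j _ => heq1 i j
      · exact Finset.sum_congr rfl fun w _ => by
          congr 1
          exact Finset.sum_congr rfl fun i _ => Finset.sum_congr rfl fun j _ => heq2 w i j
    rw [hcand, hhat']
    refine add_le_add ?_ ?_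
    · exact Finset.sum_le_sum fun i _ => Finset.sum_le_sum fun j _ =>
        mul_le_mul_of_nonneg_left (hl1' i j) (hg1 i j)
    · exact Finset.sum_le_sum fun w _ => mul_le_mul_of_nonneg_right
        (Finset.sum_le_sum fun i _ => Finset.sum_le_sum fun j _ =>
          mul_le_mul_of_nonneg_left (hl2' w i j) (hg2 w i j)) (hp w).le
  · -- generator optimality
    intro k
    obtain ⟨hc1cx, -, hc1d, -⟩ := hA1.1 k
    obtain ⟨hc2cx, -, hc2d, -⟩ := hA1.2.1 k
    refine ⟨hyG1 k, hyG2 k, ?_⟩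
    intro y1' y2' h1' h2'
    have t1 : M.lam1 (nodeG k) * y1' - c1 k y1'
        ≤ M.lam1 (nodeG k) * P.yG1 k - c1 k (P.yG1 k) :=
      price_opt hc1cx.convexOn hc1d (hyG1 k) (hc1a k) (hc1b k) h1'
    have t2 : ∑ w, (M.lam2 w (nodeG k) * y2' w - c2 k (y2' w)) * p w
        ≤ ∑ w, (M.lam2 w (nodeG k) * P.yG2 k w - c2 k (P.yG2 k w)) * p w :=
      Finset.sum_le_sum fun w _ => mul_le_mul_of_nonneg_right
        (price_opt hc2cx.convexOn hc2d (hyG2 k w) (hc2a k w) (hc2b k w) (h2' w)) (hp w).le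
    linarith
  · -- LSE optimality
    intro k
    obtain ⟨hdrcx, -, hdrd, -⟩ := hA1.2.2.1 k
    obtain ⟨hbocx, -, hbod, -⟩ := hA1.2.2.2 k
    refine ⟨hyL1 k, hyL2 k, hx k, hz k, hcov k, ?_⟩
    intro y1' y2' x' z' h1' h2' h3' h4' hcov'
    have key : ∀ w, M.mu k w * P.yL1 k + M.lam2 w (nodeL k) * P.yL2 k w
        + (cdr k (P.xdr k w) + cbo k (P.zbo k w))
        ≤ M.mu k w * y1' + M.lam2 w (nodeL k) * y2' w + (cdr k (x' w) + cbo k (z' w)) := by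
      intro w
      have f2' : M.lam2 w (nodeL k) * P.yL2 k w = M.mu k w * P.yL2 k w := by
        rcases eq_or_lt_of_le (hyL2 k w) with h | h
        · rw [← h]; ring
        · rw [hl2b k w h]
      have f2c : M.mu k w * y2' w ≤ M.lam2 w (nodeL k) * y2' w :=
        mul_le_mul_of_nonneg_right (hl2a k w) (h2' w)
      have f3 : M.mu k w * x' w - cdr k (x' w) ≤ M.mu k w * P.xdr k w - cdr k (P.xdr k w) :=
        price_opt hdrcx.convexOn hdrd (hx k w) (hdra k w) (hdrb k w) (h3' w)
      have f4 : M.mu k w * z' w - cbo k (z' w) ≤ M.mu k w * P.zbo k w - cbo k (P.zbo k w) :=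
        price_opt hbocx.convexOn hbod (hz k w) (hboa k w) (hbob k w) (h4' w)
      have f5 : M.mu k w * (P.yL1 k + P.yL2 k w + P.xdr k w + P.zbo k w)
          ≤ M.mu k w * (y1' + y2' w + x' w + z' w) := by
        have hle : M.mu k w * (D k - ren k w) ≤ M.mu k w * (y1' + y2' w + x' w + z' w) :=
          mul_le_mul_of_nonneg_left (hcov' w) (hmu k w)
        rcases eq_or_lt_of_le (hcov k w) with h | h
        · rw [← h]; exact hle
        · rw [hcs k w h]; simp
      nlinarith [f2', f2c, f3, f4, f5]
    have hsum : ∑ w, (M.mu k w * P.yL1 k + M.lam2 w (nodeL k) * P.yL2 k w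
          + (cdr k (P.xdr k w) + cbo k (P.zbo k w))) * p w
        ≤ ∑ w, (M.mu k w * y1' + M.lam2 w (nodeL k) * y2' w
          + (cdr k (x' w) + cbo k (z' w))) * p w :=
      Finset.sum_le_sum fun w _ => mul_le_mul_of_nonneg_right (key w) (hp w).le
    have expand : ∀ (a : ℝ) (y2 x z : W → ℝ),
        ∑ w, (M.mu k w * a + M.lam2 w (nodeL k) * y2 w + (cdr k (x w) + cbo k (z w))) * p w
        = (∑ w, M.mu k w * p w) * a + (∑ w, M.lam2 w (nodeL k) * y2 w * p w)
          + ∑ w, (cdr k (x w) + cbo k (z w)) * p w := by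
      intro a y2 x z
      rw [Finset.sum_congr rfl (fun w (_ : w ∈ Finset.univ) => show
        (M.mu k w * a + M.lam2 w (nodeL k) * y2 w + (cdr k (x w) + cbo k (z w))) * p w
        = M.mu k w * a * p w + M.lam2 w (nodeL k) * y2 w * p w
          + (cdr k (x w) + cbo k (z w)) * p w from by ring)]
      rw [Finset.sum_add_distrib, Finset.sum_add_distrib]
      have hfirst : ∑ w, M.mu k w * a * p w = (∑ w, M.mu k w * p w) * a := by
        rw [Finset.sum_mul]
        exact Finset.sum_congr rfl fun w _ => by ring
      rw [hfirst]
    rw [expand (P.yL1 k) (P.yL2 k) (P.xdr k) (P.zbo k), expand y1' y2' x' z'] at hsum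
    have f1' : M.lam1 (nodeL k) * P.yL1 k = (∑ w, M.mu k w * p w) * P.yL1 k := by
      rcases eq_or_lt_of_le (hyL1 k) with h | h
      · rw [← h]; ring
      · rw [hl1b k h]
    have f1c : (∑ w, M.mu k w * p w) * y1' ≤ M.lam1 (nodeL k) * y1' :=
      mul_le_mul_of_nonneg_right (hl1a k) h1'
    linarith
  · -- market clearing
    have collapseG : ∀ (f : G → ℝ),
        ∑ i, ∑ k, (if nodeG k = i then f k else 0) = ∑ k, f k := by
      intro f
      rw [Finset.sum_comm]
      simp
    have collapseL : ∀ (f : L → ℝ),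
        ∑ i, ∑ k, (if nodeL k = i then f k else 0) = ∑ k, f k := by
      intro f
      rw [Finset.sum_comm]
      simp
    constructor
    · have hzero1 : ∑ i, ∑ j, B i j * (P.th1 i - P.th1 j) = 0 :=
        sum_antisymm _ (fun i j => by simp only [hBsymm j i]; ring)
      have hs1 : ∑ i, ((∑ k, if nodeG k = i then P.yG1 k else 0)
          - (∑ k, if nodeL k = i then P.yL1 k else 0)) = 0 := by
        rw [Finset.sum_congr rfl fun i _ => hbal1 i]
        exact hzero1
      rw [Finset.sum_sub_distrib, collapseG, collapseL] at hs1
      linarith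
    · intro w
      have hzero2 : ∑ i, ∑ j, B i j * (P.th2 w i - P.th2 w j - P.th1 i + P.th1 j) = 0 :=
        sum_antisymm _ (fun i j => by simp only [hBsymm j i]; ring)
      have hs2 : ∑ i, ((∑ k, if nodeG k = i then P.yG2 k w else 0)
          - (∑ k, if nodeL k = i then P.yL2 k w else 0)) = 0 := by
        rw [Finset.sum_congr rfl fun i _ => hbal2 w i]
        exact hzero2
      rw [Finset.sum_sub_distrib, collapseG, collapseL] at hs2
      linarith
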